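/- arXiv:2511.14444 — 3 statements merged into one kernel-verified Lean document; each statement's English description precedes it below -/
import Mathlib

section
/- Let F be a finite field and let W₁, W₂, W₃, A, B, C be independent uniformly distributed random variables on F. Define X₂ = W₂ - A + C and X₃ = W₃ - B - C. Then the conditional mutual information I(X₂, X₃ ; W₂, W₃ | W₂ + W₃, W₁, A, B) = 0. -/
/-!
Each of `X`, `Y`, `Z` and their tuples is an additive homomorphism out of the uniform sample
space `F⁶`, so its entropy is `log |F⁶| - log |kernel|`. Writing `K_X = ker X` etc.,
`I(X ; Y | Z) = log |K_X ⊓ K_Y ⊓ K_Z| + log |K_Z| - log |K_X ⊓ K_Z| - log |K_Y ⊓ K_Z|`, and by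
`|A ⊔ B| |A ⊓ B| = |A| |B|` this vanishes as soon as `(K_X ⊓ K_Z) ⊔ (K_Y ⊓ K_Z) = K_Z`.
In the coordinates `(W₁, W₂, W₃, A, B, C)`, `K_Z = {(0, t, -t, 0, 0, c)}`, and such a point is
`(0, t, -t, 0, 0, -t)`, killed by `X`, plus `(0, 0, 0, 0, 0, c + t)`, killed by `Y`.
-/

open Finset

/-- Probability of `X = a` under the uniform distribution on the finite sample space `Ω`. -/
noncomputable def pr {Ω α : Type*} [Fintype Ω] [DecidableEq α] (X : Ω → α) (a : α) : ℝ :=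
  ((Finset.univ.filter fun ω => X ω = a).card : ℝ) / (Fintype.card Ω : ℝ)

/-- Shannon entropy (natural base) of `X` under the uniform distribution on `Ω`. -/
noncomputable def ent {Ω α : Type*} [Fintype Ω] [Fintype α] [DecidableEq α] (X : Ω → α) : ℝ :=
  -∑ a : α, pr X a * Real.log (pr X a)

/-- Conditional entropy `H(X | Y)`. -/
noncomputable def condEnt {Ω α β : Type*} [Fintype Ω] [Fintype α] [Fintype β]
    [DecidableEq α] [DecidableEq β] (X : Ω → α) (Y : Ω → β) : ℝ :=
  ent (fun ω => (X ω, Y ω)) - ent Y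

/-- Mutual information `I(X ; Y)`. -/
noncomputable def mi {Ω α β : Type*} [Fintype Ω] [Fintype α] [Fintype β]
    [DecidableEq α] [DecidableEq β] (X : Ω → α) (Y : Ω → β) : ℝ :=
  ent X + ent Y - ent (fun ω => (X ω, Y ω))

/-- Conditional mutual information `I(X ; Y | Z)`. -/
noncomputable def cmi {Ω α β γ : Type*} [Fintype Ω] [Fintype α] [Fintype β] [Fintype γ]
    [DecidableEq α] [DecidableEq β] [DecidableEq γ]
    (X : Ω → α) (Y : Ω → β) (Z : Ω → γ) : ℝ :=
  ent (fun ω => (X ω, Z ω)) + ent (fun ω => (Y ω, Z ω))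
    - ent (fun ω => (X ω, Y ω, Z ω)) - ent Z

theorem AddSubgroup.card_sup_mul_card_inf {G : Type*} [AddGroup G] (H K : AddSubgroup G)
    [K.Normal] :
    Nat.card ↥(H ⊔ K) * Nat.card ↥(H ⊓ K) = Nat.card H * Nat.card K := by
  have hsup : Nat.card K * K.relIndex (H ⊔ K) = Nat.card ↥(H ⊔ K) := by
    rw [← relIndex_bot_left, relIndex_mul_relIndex _ _ _ bot_le le_sup_right, relIndex_bot_left]
  have hH : Nat.card ↥(H ⊓ K) * K.relIndex H = Nat.card H := by
    rw [← inf_relIndex_left, ← relIndex_bot_left, relIndex_mul_relIndex _ _ _ bot_le inf_le_left,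
      relIndex_bot_left]
  rw [← hsup, ← hH, relIndex_sup_right]
  ring

theorem ent_eq_log_of_card_fiber {Ω α : Type*} [Fintype Ω] [Nonempty Ω] [Fintype α]
    [DecidableEq α] (X : Ω → α) (k : ℕ) (hk : ∀ a ∈ Set.range X, #{ω | X ω = a} = k) :
    ent X = Real.log (Fintype.card Ω / k) := by
  have hterm : ∀ a, pr X a * Real.log (pr X a) = pr X a * Real.log (k / Fintype.card Ω) := by
    intro a
    by_cases ha : a ∈ Set.range X
    · rw [pr, hk a ha]
    · have hzero : pr X a = 0 := by
        rw [pr, Finset.card_eq_zero.mpr (Finset.filter_eq_empty_iff.mpr fun ω _ h => ha ⟨ω, h⟩)]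
        simp
      rw [hzero, zero_mul, zero_mul]
  have htotal : ∑ a, pr X a = 1 := by
    simp only [pr, ← Finset.sum_div]
    rw [← Nat.cast_sum, ← Finset.card_eq_sum_card_fiberwise fun ω _ => by simp, Finset.card_univ,
      div_self (by positivity)]
  rw [ent, Finset.sum_congr rfl fun a _ => hterm a, ← Finset.sum_mul, htotal, one_mul,
    ← Real.log_inv, inv_div]

theorem ent_addMonoidHom {G α : Type*} [AddGroup G] [Fintype G] [AddMonoid α] [Fintype α]
    [DecidableEq α] (f : G →+ α) :
    ent f = Real.log (Fintype.card G) - Real.log (Nat.card f.ker) := by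
  classical
  have hker : #{g | f g = 0} = Nat.card f.ker := by
    rw [← Fintype.card_subtype, ← Nat.card_eq_fintype_card]
    rfl
  rw [ent_eq_log_of_card_fiber f _ fun a ha =>
      (AddMonoidHom.card_fiber_eq_of_mem_range f ha ⟨0, map_zero f⟩).trans hker,
    Real.log_div (by positivity) (Nat.cast_ne_zero.mpr Nat.card_pos.ne')]

theorem cmi_addMonoidHom_eq_zero_of_ker_sup {G α β γ : Type*} [AddCommGroup G] [Fintype G]
    [AddMonoid α] [Fintype α] [DecidableEq α] [AddMonoid β] [Fintype β] [DecidableEq β]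
    [AddMonoid γ] [Fintype γ] [DecidableEq γ] (X : G →+ α) (Y : G →+ β) (Z : G →+ γ)
    (h : X.ker ⊓ Z.ker ⊔ Y.ker ⊓ Z.ker = Z.ker) : cmi X Y Z = 0 := by
  have hcard := AddSubgroup.card_sup_mul_card_inf (X.ker ⊓ Z.ker) (Y.ker ⊓ Z.ker)
  rw [h, show X.ker ⊓ Z.ker ⊓ (Y.ker ⊓ Z.ker) = X.ker ⊓ (Y.ker ⊓ Z.ker) by
    rw [inf_inf_inf_comm, inf_idem, inf_assoc]] at hcard
  show ent (X.prod Z) + ent (Y.prod Z) - ent (X.prod (Y.prod Z)) - ent Z = 0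
  simp only [ent_addMonoidHom, AddMonoidHom.ker_prod]
  have hlog := congrArg (fun n : ℕ => Real.log n) hcard
  simp only [Nat.cast_mul] at hlog
  have hne : ∀ H : AddSubgroup G, (Nat.card H : ℝ) ≠ 0 := fun _ =>
    Nat.cast_ne_zero.mpr Nat.card_pos.ne'
  rw [Real.log_mul (hne _) (hne _), Real.log_mul (hne _) (hne _)] at hlog
  linarith

/-- Security at user 1 in the 3-user DSA scheme: with `W₁,W₂,W₃,A,B,C` i.i.d. uniform
on the finite field `F` (modeled by the uniform distribution on `F⁶`), the messages
`X₂ = W₂ - A + C` and `X₃ = W₃ - B - C` satisfy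
`I(X₂,X₃ ; W₂,W₃ | W₂+W₃, W₁, A, B) = 0`. -/
theorem stmt5 (F : Type) [Field F] [Fintype F] [DecidableEq F] :
    cmi (Ω := F × F × F × F × F × F)
      (fun ω => (ω.2.1 - ω.2.2.2.1 + ω.2.2.2.2.2, ω.2.2.1 - ω.2.2.2.2.1 - ω.2.2.2.2.2))
      (fun ω => (ω.2.1, ω.2.2.1))
      (fun ω => (ω.2.1 + ω.2.2.1, ω.1, ω.2.2.2.1, ω.2.2.2.2.1)) = 0 := by
  let X : F × F × F × F × F × F →+ F × F := AddMonoidHom.mk'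
    (fun ω => (ω.2.1 - ω.2.2.2.1 + ω.2.2.2.2.2, ω.2.2.1 - ω.2.2.2.2.1 - ω.2.2.2.2.2))
    (fun _ _ => by ext <;> simp only [Prod.fst_add, Prod.snd_add] <;> abel)
  let Y : F × F × F × F × F × F →+ F × F := AddMonoidHom.mk'
    (fun ω => (ω.2.1, ω.2.2.1)) (fun _ _ => rfl)
  let Z : F × F × F × F × F × F →+ F × F × F × F := AddMonoidHom.mk'
    (fun ω => (ω.2.1 + ω.2.2.1, ω.1, ω.2.2.2.1, ω.2.2.2.2.1))
    (fun _ _ => Prod.ext (add_add_add_comm ..) rfl)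
  refine cmi_addMonoidHom_eq_zero_of_ker_sup X Y Z
    (le_antisymm (sup_le inf_le_right inf_le_right) ?_)
  rintro ⟨w₁, w₂, w₃, a, b, c⟩ hZ
  simp only [AddMonoidHom.mem_ker, AddMonoidHom.mk'_apply, Prod.mk_eq_zero, Z] at hZ
  obtain ⟨hw, rfl, rfl, rfl⟩ := hZ
  refine AddSubgroup.mem_sup.mpr
    ⟨(0, w₂, w₃, 0, 0, -w₂), ?_, (0, 0, 0, 0, 0, c + w₂), ?_, by simp⟩
  · simp [X, Z, hw, add_comm w₃ w₂]
  · simp [Y, Z]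
end

section
/- Let F be a finite field and let W₂, W₃, C be independent uniform random variables on F. Then H(W₂ + C, W₃ - C | W₂ + W₃) = H(C) = log|F|; equivalently, given W₂+W₃, the pair (W₂+C, W₃-C) has exactly |F| equally likely values. -/
open Finset

section aux
variable {Ω α : Type*} [Fintype Ω] [Fintype α] [DecidableEq α]

lemma sum_pr [Nonempty Ω] (X : Ω → α) : ∑ a, pr X a = 1 := by
  have hcard : (Fintype.card Ω : ℝ) ≠ 0 := by
    exact_mod_cast Fintype.card_ne_zero
  simp only [pr, ← Finset.sum_div]
  rw [div_eq_one_iff_eq hcard]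
  norm_cast
  exact (Finset.card_eq_sum_card_fiberwise (fun x _ => Finset.mem_univ (X x))).symm

lemma ent_uniform_like [Nonempty Ω] (X : Ω → α) (p : ℝ)
    (h : ∀ a, pr X a = p ∨ pr X a = 0) : ent X = -Real.log p := by
  have key : ∀ a ∈ Finset.univ, pr X a * Real.log (pr X a) = pr X a * Real.log p := by
    intro a _
    rcases h a with h' | h' <;> rw [h'] <;> simp
  rw [ent, Finset.sum_congr rfl key, ← Finset.sum_mul, sum_pr, one_mul]

omit [Fintype α] in
lemma pr_card (X : Ω → α) (a : α) :
    pr X a = (Fintype.card {ω // X ω = a} : ℝ) / Fintype.card Ω := by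
  rw [pr, Fintype.card_subtype]

end aux


/-- With `W₂, W₃, C` i.i.d. uniform on the finite field `F` (modeled by the uniform
distribution on `F³` with coordinates `W₂ = ω.1`, `W₃ = ω.2.1`, `C = ω.2.2`),
`H(W₂+C, W₃-C | W₂+W₃) = H(C) = log |F|`. -/
theorem stmt7 (F : Type) [Field F] [Fintype F] [DecidableEq F] :
    condEnt (Ω := F × F × F)
        (fun ω => (ω.1 + ω.2.2, ω.2.1 - ω.2.2)) (fun ω => ω.1 + ω.2.1)
      = ent (fun ω : F × F × F => ω.2.2)
    ∧ ent (fun ω : F × F × F => ω.2.2) = Real.log (Fintype.card F) := by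
  set q : ℝ := (Fintype.card F : ℝ) with hqdef
  have hq : 0 < q := by rw [hqdef]; exact_mod_cast Fintype.card_pos
  have hcardΩ : (Fintype.card (F × F × F) : ℝ) = q * (q * q) := by
    simp [Fintype.card_prod, hqdef]
  -- entropy of C
  have hprC : ∀ a : F, pr (fun ω : F × F × F => ω.2.2) a = 1 / q := by
    intro a
    rw [pr_card, hcardΩ]
    have : Fintype.card {ω : F × F × F // ω.2.2 = a} = Fintype.card (F × F) :=
      Fintype.card_congr
        ⟨fun ω => (ω.1.1, ω.1.2.1), fun x => ⟨(x.1, x.2, a), rfl⟩,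
         by rintro ⟨⟨w, x, c⟩, rfl⟩; rfl, fun x => rfl⟩
    rw [this, Fintype.card_prod]
    push_cast
    rw [← hqdef]
    field_simp
  have hentC : ent (fun ω : F × F × F => ω.2.2) = Real.log q := by
    rw [ent_uniform_like _ (1 / q) (fun a => Or.inl (hprC a)), one_div,
      Real.log_inv, neg_neg]
  -- entropy of S = W₂ + W₃
  have hprS : ∀ a : F, pr (fun ω : F × F × F => ω.1 + ω.2.1) a = 1 / q := by
    intro a
    rw [pr_card, hcardΩ]
    have : Fintype.card {ω : F × F × F // ω.1 + ω.2.1 = a} = Fintype.card (F × F) :=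
      Fintype.card_congr
        ⟨fun ω => (ω.1.1, ω.1.2.2), fun x => ⟨(x.1, a - x.1, x.2), by ring⟩,
         by rintro ⟨⟨w, x, c⟩, h⟩
            have hx : a - w = x := by rw [← h]; ring
            apply Subtype.ext
            show (w, a - w, c) = (w, x, c)
            rw [hx],
         fun x => rfl⟩
    rw [this, Fintype.card_prod]
    push_cast
    rw [← hqdef]
    field_simp
  have hentS : ent (fun ω : F × F × F => ω.1 + ω.2.1) = Real.log q := by
    rw [ent_uniform_like _ (1 / q) (fun a => Or.inl (hprS a)), one_div,
      Real.log_inv, neg_neg]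
  -- entropy of the triple
  set T : F × F × F → (F × F) × F :=
    fun ω => ((ω.1 + ω.2.2, ω.2.1 - ω.2.2), ω.1 + ω.2.1) with hTdef
  have hprT : ∀ v : (F × F) × F, pr T v = 1 / (q * q) ∨ pr T v = 0 := by
    rintro ⟨⟨a, b⟩, s⟩
    by_cases hs : s = a + b
    · left
      subst hs
      rw [pr_card, hcardΩ]
      have : Fintype.card {ω : F × F × F // T ω = ((a, b), a + b)} = Fintype.card F :=
        Fintype.card_congr
          ⟨fun ω => ω.1.2.2,
           fun c => ⟨(a - c, b + c, c), by
              have h1 : a - c + c = a := by ring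
              have h2 : b + c - c = b := by ring
              have h3 : a - c + (b + c) = a + b := by ring
              simp only [hTdef]
              rw [h1, h2, h3]⟩,
           by rintro ⟨⟨w, x, c⟩, h⟩
              simp only [hTdef, Prod.mk.injEq] at h
              obtain ⟨⟨h1, h2⟩, h3⟩ := h
              have hw : a - c = w := by rw [← h1]; ring
              have hx : b + c = x := by rw [← h2]; ring
              apply Subtype.ext
              show (a - c, b + c, c) = (w, x, c)
              rw [hw, hx],
           fun c => rfl⟩
      rw [this]
      rw [← hqdef]
      field_simp
    · right
      rw [pr, div_eq_zero_iff]
      left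
      norm_cast
      rw [Finset.card_eq_zero, Finset.filter_eq_empty_iff]
      intro ω _
      simp only [hTdef, Prod.mk.injEq]
      rintro ⟨⟨h1, h2⟩, h3⟩
      exact hs (by rw [← h1, ← h2, ← h3]; ring)
  have hentT : ent T = Real.log q + Real.log q := by
    rw [ent_uniform_like _ (1 / (q * q)) hprT, one_div, Real.log_inv, neg_neg,
      Real.log_mul hq.ne' hq.ne']
  constructor
  · show ent T - ent (fun ω : F × F × F => ω.1 + ω.2.1) = _
    rw [hentT, hentS, hentC]
    ring
  · rw [hentC]
end

section
/- Let W₁, ..., W_K be independent random variables each uniform on F^L for a finite field F, and let the keys Z₁,...,Z_K be jointly independent of (W₁,...,W_K). Suppose X_u is a deterministic function of (W_u, Z_u) for each u, and for some user k ≠ u the recovery constraint H(∑_{i=1}^K W_i | {X_i}_{i≠k}, W_k, Z_k) = 0 holds. Then H(X_u | {W_i, Z_i}_{i ∈ [K]∖{u}}) ≥ L·log|F|. -/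
/-!
Since the sum `∑ Wᵢ` is recoverable from `{Xᵢ}_{i≠k}, W_k, Z_k` and `u ≠ k`, the input `W_u`
is, almost surely, a function of `X_u` together with the inputs and keys `C` of the other
users. Hence `H(X_u, C) = H(W_u, X_u, C) ≥ H(W_u, C) = H(C) + L log |F|`, the last step
because `W_u` is uniform on `F^L` and independent of `C`.
-/

open Finset

/-- Probability of `X = a` under the probability mass function `μ` on the finite
sample space `Ω`. -/
noncomputable def prW {Ω α : Type*} [Fintype Ω] [DecidableEq α] (μ : Ω → ℝ)
    (X : Ω → α) (a : α) : ℝ :=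
  ∑ ω ∈ Finset.univ.filter (fun ω => X ω = a), μ ω

/-- Shannon entropy (natural base) of `X` under the probability mass function `μ`. -/
noncomputable def entW {Ω α : Type*} [Fintype Ω] [Fintype α] [DecidableEq α] (μ : Ω → ℝ)
    (X : Ω → α) : ℝ :=
  -∑ a : α, prW μ X a * Real.log (prW μ X a)

/-- Conditional entropy `H(X | Y)` under `μ`. -/
noncomputable def condEntW {Ω α β : Type*} [Fintype Ω] [Fintype α] [Fintype β]
    [DecidableEq α] [DecidableEq β] (μ : Ω → ℝ) (X : Ω → α) (Y : Ω → β) : ℝ :=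
  entW μ (fun ω => (X ω, Y ω)) - entW μ Y

/-- Conditional mutual information `I(X ; Y | Z)` under `μ`. -/
noncomputable def cmiW {Ω α β γ : Type*} [Fintype Ω] [Fintype α] [Fintype β] [Fintype γ]
    [DecidableEq α] [DecidableEq β] [DecidableEq γ] (μ : Ω → ℝ)
    (X : Ω → α) (Y : Ω → β) (Z : Ω → γ) : ℝ :=
  entW μ (fun ω => (X ω, Z ω)) + entW μ (fun ω => (Y ω, Z ω))
    - entW μ (fun ω => (X ω, Y ω, Z ω)) - entW μ Z

/-- Product mass function making the inputs `W₁,…,W_K` i.i.d. uniform on `F^L` and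
jointly independent of the key randomness `z`, which has mass function `ν`. -/
noncomputable def dsaMeas (F : Type) [Fintype F] (K L : ℕ) {ΩZ : Type} [Fintype ΩZ]
    (ν : ΩZ → ℝ) : (Fin K → Fin L → F) × ΩZ → ℝ :=
  fun ω => ν ω.2 / (Fintype.card (Fin K → Fin L → F) : ℝ)

section Entropy

variable {Ω α β : Type*} [Fintype Ω] [DecidableEq α] [DecidableEq β] {μ : Ω → ℝ}

lemma prW_nonneg (hμ : ∀ ω, 0 ≤ μ ω) (T : Ω → α) (a : α) : 0 ≤ prW μ T a :=
  sum_nonneg fun ω _ => hμ ω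

lemma le_prW (hμ : ∀ ω, 0 ≤ μ ω) (T : Ω → α) (ω : Ω) : μ ω ≤ prW μ T (T ω) :=
  single_le_sum (fun ω _ => hμ ω) (by simp)

lemma prW_congr {T T' : Ω → α} (h : ∀ ω, μ ω ≠ 0 → T ω = T' ω) (a : α) :
    prW μ T a = prW μ T' a := by
  unfold prW
  rw [sum_filter, sum_filter]
  refine sum_congr rfl fun ω _ => ?_
  by_cases hω : μ ω = 0
  · simp [hω]
  · rw [h ω hω]

lemma entW_congr [Fintype α] {T T' : Ω → α} (h : ∀ ω, μ ω ≠ 0 → T ω = T' ω) :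
    entW μ T = entW μ T' := by
  simp only [entW, prW_congr h]

lemma prW_eq_of_equiv (e : Ω ≃ Ω) (he : ∀ ω, μ (e ω) = μ ω) {T : Ω → α} {a a' : α}
    (h : ∀ ω, T ω = a ↔ T (e ω) = a') : prW μ T a = prW μ T a' :=
  sum_equiv e (by simpa using h) fun ω _ => (he ω).symm

lemma sum_prW [Fintype α] (T : Ω → α) : ∑ a, prW μ T a = ∑ ω, μ ω :=
  sum_fiberwise univ T μ

lemma prW_comp [Fintype α] (T : Ω → α) (f : α → β) (b : β) :
    prW μ (fun ω => f (T ω)) b = ∑ a ∈ univ.filter (fun a => f a = b), prW μ T a := by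
  unfold prW
  rw [← sum_fiberwise_of_maps_to (g := T) (t := univ.filter fun a => f a = b)
    (by simp)]
  refine sum_congr rfl fun a ha => sum_congr ?_ fun _ _ => rfl
  ext ω
  simp only [mem_filter, mem_univ, true_and] at ha ⊢
  exact ⟨And.right, fun h => ⟨h ▸ ha, h⟩⟩

lemma prW_eq_sum_prW_pair [Fintype α] (S : Ω → α) (Y : Ω → β) (b : β) :
    prW μ Y b = ∑ a, prW μ (fun ω => (S ω, Y ω)) (a, b) := by
  unfold prW
  rw [← sum_fiberwise _ S μ]
  refine sum_congr rfl fun a _ => sum_congr ?_ fun _ _ => rfl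
  ext ω
  simp only [mem_filter, mem_univ, true_and, Prod.mk.injEq]
  tauto

lemma entW_comp_le [Fintype α] [Fintype β] (hμ : ∀ ω, 0 ≤ μ ω) (T : Ω → α) (f : α → β) :
    entW μ (fun ω => f (T ω)) ≤ entW μ T := by
  unfold entW
  rw [neg_le_neg_iff, ← sum_fiberwise univ f]
  refine sum_le_sum fun b _ => ?_
  rw [prW_comp T f b, sum_mul]
  refine sum_le_sum fun a ha => ?_
  rcases (prW_nonneg hμ T a).eq_or_lt with h0 | h0
  · simp [← h0]
  · exact mul_le_mul_of_nonneg_left (Real.log_le_log h0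
      (single_le_sum (fun a _ => prW_nonneg hμ T a) ha)) h0.le

lemma entW_graph [Fintype α] [Fintype β] (hμ : ∀ ω, 0 ≤ μ ω) (T : Ω → α) (f : α → β) :
    entW μ (fun ω => (f (T ω), T ω)) = entW μ T :=
  le_antisymm (entW_comp_le hμ T fun a => (f a, a))
    (entW_comp_le hμ (fun ω => (f (T ω), T ω)) Prod.snd)

lemma condEntW_eq_sum [Fintype α] [Fintype β] (S : Ω → α) (Y : Ω → β) :
    condEntW μ S Y = ∑ p : α × β, prW μ (fun ω => (S ω, Y ω)) p *
      (Real.log (prW μ Y p.2) - Real.log (prW μ (fun ω => (S ω, Y ω)) p)) := by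
  simp only [condEntW, entW, mul_sub, sum_sub_distrib, Fintype.sum_prod_type_right,
    ← sum_mul, ← prW_eq_sum_prW_pair]
  ring

lemma prW_pair_le [Fintype α] (hμ : ∀ ω, 0 ≤ μ ω) (S : Ω → α) (Y : Ω → β) (a : α) (b : β) :
    prW μ (fun ω => (S ω, Y ω)) (a, b) ≤ prW μ Y b := by
  rw [prW_eq_sum_prW_pair S Y b]
  exact single_le_sum (fun a _ => prW_nonneg hμ _ (a, b)) (mem_univ a)

lemma eq_of_condEntW_eq_zero [Fintype α] [Fintype β] (hμ : ∀ ω, 0 ≤ μ ω) {S : Ω → α}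
    {Y : Ω → β} (h : condEntW μ S Y = 0) {ω ω' : Ω} (hω : μ ω ≠ 0) (hω' : μ ω' ≠ 0)
    (hY : Y ω = Y ω') : S ω = S ω' := by
  by_contra hne
  set P := prW μ (fun ω => (S ω, Y ω))
  have hP : 0 < P (S ω, Y ω) := ((hμ ω).lt_of_ne' hω).trans_le (le_prW hμ _ ω)
  have hP' : 0 < P (S ω', Y ω) := ((hμ ω').lt_of_ne' hω').trans_le (hY ▸ le_prW hμ _ ω')
  -- two values of `S` share the fibre `Y = Y ω`, so neither carries all of its mass
  have hlt : P (S ω, Y ω) < prW μ Y (Y ω) := by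
    have hpair : P (S ω, Y ω) + P (S ω', Y ω) ≤ prW μ Y (Y ω) := by
      have := sum_le_sum_of_subset_of_nonneg (subset_univ {S ω, S ω'})
        fun a _ _ => prW_nonneg hμ (fun ω => (S ω, Y ω)) (a, Y ω)
      rwa [sum_pair hne, ← prW_eq_sum_prW_pair] at this
    linarith
  have hterm_nonneg : ∀ p : α × β, 0 ≤ P p * (Real.log (prW μ Y p.2) - Real.log (P p)) := by
    intro p
    rcases (prW_nonneg hμ (fun ω => (S ω, Y ω)) p).eq_or_lt with h0 | h0
    · simp [P, ← h0]
    · exact mul_nonneg h0.le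
        (sub_nonneg.2 (Real.log_le_log h0 (prW_pair_le hμ S Y p.1 p.2)))
  have hpos : 0 < condEntW μ S Y := by
    rw [condEntW_eq_sum]
    exact sum_pos' (fun p _ => hterm_nonneg p)
      ⟨(S ω, Y ω), mem_univ _, mul_pos hP (sub_pos.2 (Real.log_lt_log hP hlt))⟩
  exact hpos.ne' h

lemma exists_eq_comp_of_condEntW_eq_zero [Fintype α] [Fintype β] [Nonempty α]
    (hμ : ∀ ω, 0 ≤ μ ω) {S : Ω → α} {Y : Ω → β} (h : condEntW μ S Y = 0) :
    ∃ g : β → α, ∀ ω, μ ω ≠ 0 → S ω = g (Y ω) := by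
  classical
  refine ⟨fun b => if hb : ∃ ω, μ ω ≠ 0 ∧ Y ω = b then S hb.choose
    else Classical.arbitrary α, fun ω hω => ?_⟩
  have hb : ∃ ω', μ ω' ≠ 0 ∧ Y ω' = Y ω := ⟨ω, hω, rfl⟩
  dsimp only
  rw [dif_pos hb]
  exact eq_of_condEntW_eq_zero hμ h hω hb.choose_spec.1 hb.choose_spec.2.symm

lemma entW_pair_eq_add_log_card [Fintype α] [Fintype β] [Nonempty α] (hμ1 : ∑ ω, μ ω = 1)
    (W : Ω → α) (C : Ω → β)
    (huniform : ∀ a a' c, prW μ (fun ω => (W ω, C ω)) (a, c)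
      = prW μ (fun ω => (W ω, C ω)) (a', c)) :
    entW μ (fun ω => (W ω, C ω)) = entW μ C + Real.log (Fintype.card α) := by
  have hN : (0 : ℝ) < Fintype.card α := by exact_mod_cast Fintype.card_pos
  have hP : ∀ a c, prW μ (fun ω => (W ω, C ω)) (a, c) = prW μ C c / Fintype.card α := by
    intro a c
    rw [prW_eq_sum_prW_pair W C c, sum_congr rfl fun a' _ => huniform a' a c, sum_const,
      card_univ, nsmul_eq_mul]
    field_simp
  have hterm : ∀ c, (Fintype.card α : ℝ) *
      (prW μ C c / Fintype.card α * Real.log (prW μ C c / Fintype.card α))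
      = prW μ C c * Real.log (prW μ C c) - prW μ C c * Real.log (Fintype.card α) := by
    intro c
    by_cases h0 : prW μ C c = 0
    · simp [h0]
    · rw [Real.log_div h0 hN.ne']
      field_simp
  unfold entW
  rw [Fintype.sum_prod_type]
  simp only [hP]
  rw [sum_const, card_univ, nsmul_eq_mul, mul_sum]
  simp only [hterm]
  rw [sum_sub_distrib, ← sum_mul, sum_prW, hμ1]
  ring

end Entropy

section SecureAggregation

variable {F : Type} [Fintype F] {K L : ℕ} {ΩZ : Type} [Fintype ΩZ]

lemma dsaMeas_nonneg {ν : ΩZ → ℝ} (hν0 : ∀ z, 0 ≤ ν z) (ω : (Fin K → Fin L → F) × ΩZ) :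
    0 ≤ dsaMeas F K L ν ω :=
  div_nonneg (hν0 _) (Nat.cast_nonneg _)

lemma sum_dsaMeas [Nonempty F] {ν : ΩZ → ℝ} (hν1 : ∑ z, ν z = 1) :
    ∑ ω, dsaMeas F K L ν ω = 1 := by
  have hM : (0 : ℝ) < Fintype.card (Fin K → Fin L → F) := by exact_mod_cast Fintype.card_pos
  simp only [dsaMeas, Fintype.sum_prod_type, ← sum_div, hν1, sum_const, card_univ, nsmul_eq_mul]
  field_simp

lemma prW_dsaMeas_input_pair_eq [AddCommGroup F] [DecidableEq F] (ν : ΩZ → ℝ) (u : Fin K)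
    {β : Type} [DecidableEq β] (C : (Fin K → Fin L → F) × ΩZ → β)
    (hC : ∀ w z d, C (w + Pi.single u d, z) = C (w, z)) (a a' : Fin L → F) (c : β) :
    prW (dsaMeas F K L ν) (fun ω => (ω.1 u, C ω)) (a, c)
      = prW (dsaMeas F K L ν) (fun ω => (ω.1 u, C ω)) (a', c) := by
  -- shifting the `u`-th input by `a' - a` preserves `dsaMeas` and fixes `C`
  refine prW_eq_of_equiv ((Equiv.addRight (Pi.single u (a' - a))).prodCongr (Equiv.refl ΩZ))
    (fun ω => rfl) fun ω => ?_
  obtain ⟨w, z⟩ := ω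
  simp [hC, ← eq_sub_iff_add_eq, sub_sub_cancel]

lemma exists_input_eq_comp_of_recovery [AddCommGroup F] [DecidableEq F] {𝒵 𝒳 : Type}
    [Fintype 𝒵] [DecidableEq 𝒵] [Fintype 𝒳] [DecidableEq 𝒳] {ν : ΩZ → ℝ}
    (hν0 : ∀ z, 0 ≤ ν z) {Z : Fin K → ΩZ → 𝒵} {X : Fin K → (Fin K → Fin L → F) × ΩZ → 𝒳}
    (hX : ∀ i, ∃ f : (Fin L → F) × 𝒵 → 𝒳, ∀ ω, X i ω = f (ω.1 i, Z i ω.2))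
    {k u : Fin K} (hku : k ≠ u)
    (hrec : condEntW (dsaMeas F K L ν) (fun ω => ∑ i, ω.1 i)
      (fun ω => ((fun i : {i : Fin K // i ≠ k} => X i.1 ω), ω.1 k, Z k ω.2)) = 0) :
    ∃ decode : 𝒳 × ({i : Fin K // i ≠ u} → (Fin L → F) × 𝒵) → Fin L → F,
      ∀ ω, dsaMeas F K L ν ω ≠ 0 → ω.1 u = decode (X u ω, fun i => (ω.1 i.1, Z i.1 ω.2)) := by
  choose f hf using hX
  obtain ⟨g, hg⟩ := exists_eq_comp_of_condEntW_eq_zero (dsaMeas_nonneg hν0) hrec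
  -- the data user `k` decodes from is computable from `X_u` and the other users' `(Wᵢ, Zᵢ)`;
  -- subtracting their inputs from the decoded sum leaves `W_u`
  refine ⟨fun p => g ((fun i => if h : i.1 = u then p.1 else f i.1 (p.2 ⟨i.1, h⟩)),
    p.2 ⟨k, hku⟩) - ∑ i, (p.2 i).1, fun ω hω => eq_sub_of_add_eq ?_⟩
  rw [← Fintype.sum_eq_add_sum_subtype_ne, hg ω hω]
  congr 2
  funext i
  split_ifs with h
  · subst h; rfl
  · exact hf _ ω

end SecureAggregation

/-- Lemma 1 of the paper: with i.i.d. uniform inputs independent of the keys, each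
message `X_u` a deterministic function of `(W_u, Z_u)`, and the recovery constraint
`H(∑ W_i | {X_i}_{i≠k}, W_k, Z_k) = 0` for some user `k ≠ u`, it holds that
`H(X_u | {W_i, Z_i}_{i≠u}) ≥ L · log |F|`. -/
theorem stmt12 (F : Type) [Field F] [Fintype F] [DecidableEq F] (K L : ℕ)
    (ΩZ 𝒵 𝒳 : Type) [Fintype ΩZ] [Fintype 𝒵] [DecidableEq 𝒵] [Fintype 𝒳] [DecidableEq 𝒳]
    (ν : ΩZ → ℝ) (hν0 : ∀ z, 0 ≤ ν z) (hν1 : ∑ z, ν z = 1)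
    (Z : Fin K → ΩZ → 𝒵)
    (X : Fin K → (Fin K → Fin L → F) × ΩZ → 𝒳)
    (hX : ∀ i, ∃ f : (Fin L → F) × 𝒵 → 𝒳, ∀ ω, X i ω = f (ω.1 i, Z i ω.2))
    (k u : Fin K) (hku : k ≠ u)
    (hrec : condEntW (dsaMeas F K L ν)
        (fun ω => ∑ i, ω.1 i)
        (fun ω => ((fun i : {i : Fin K // i ≠ k} => X i.1 ω), ω.1 k, Z k ω.2)) = 0) :
    L * Real.log (Fintype.card F)
      ≤ condEntW (dsaMeas F K L ν) (X u)
          (fun ω => fun i : {i : Fin K // i ≠ u} => (ω.1 i.1, Z i.1 ω.2)) := by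
  set μ := dsaMeas F K L ν
  set C := fun ω : (Fin K → Fin L → F) × ΩZ => fun i : {i : Fin K // i ≠ u} =>
    (ω.1 i.1, Z i.1 ω.2)
  have hμ : ∀ ω, 0 ≤ μ ω := dsaMeas_nonneg hν0
  have huniform := prW_dsaMeas_input_pair_eq ν u C fun w z d => by
    funext i
    simp [C, Pi.single_eq_of_ne i.2]
  obtain ⟨decode, hdecode⟩ := exists_input_eq_comp_of_recovery hν0 hX hku hrec
  calc L * Real.log (Fintype.card F)
      = entW μ (fun ω => (ω.1 u, C ω)) - entW μ C := by
        rw [entW_pair_eq_add_log_card (sum_dsaMeas hν1) _ C huniform, Fintype.card_fun,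
          Fintype.card_fin, Nat.cast_pow, Real.log_pow]
        ring
    _ ≤ entW μ (fun ω => (ω.1 u, X u ω, C ω)) - entW μ C := by
        gcongr
        exact entW_comp_le hμ (fun ω => (ω.1 u, X u ω, C ω)) fun p => (p.1, p.2.2)
    _ = condEntW μ (X u) C := by
        rw [entW_congr (T' := fun ω => (decode (X u ω, C ω), X u ω, C ω))
          fun ω hω => by rw [← hdecode ω hω], entW_graph hμ (fun ω => (X u ω, C ω)) decode]
        rfl
end
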